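/- If r Latin squares of order K (with K ≥ 2) are pairwise orthogonal, then r ≤ K − 1. Formally: if E : Fin r → (Fin K → Fin K → Fin K) is a family such that each E a is a Latin square of order K and for all a ≠ b the squares E a and E b are orthogonal, then r ≤ K − 1. -/
import Mathlib


/-- If `r` Latin squares of order `K ≥ 2` are pairwise orthogonal, then `r ≤ K - 1`. -/
theorem orthogonal_latin_family_card_le (K r : ℕ) (hK : 2 ≤ K)
    (E : Fin r → Fin K → Fin K → Fin K)
    (hLatin : ∀ a, (∀ i, Function.Bijective (E a i)) ∧
        (∀ j, Function.Bijective fun i => E a i j))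
    (hOrth : ∀ a b, a ≠ b →
        Function.Injective fun p : Fin K × Fin K => (E a p.1 p.2, E b p.1 p.2)) :
    r ≤ K - 1 := by
  haveI : NeZero K := ⟨by omega⟩
  -- normalize: relabel symbols of each square so that row 0 is the identity
  set σ : Fin r → Fin K ≃ Fin K := fun a => Equiv.ofBijective _ ((hLatin a).1 0) with hσ
  set F : Fin r → Fin K → Fin K → Fin K := fun a i j => (σ a).symm (E a i j) with hF
  have hrow0 : ∀ a j, F a 0 j = j := by
    intro a j
    simp [hF, hσ]
  have hFOrth : ∀ a b, a ≠ b →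
      Function.Injective fun p : Fin K × Fin K => (F a p.1 p.2, F b p.1 p.2) := by
    intro a b hab p q hpq
    apply hOrth a b hab
    simp only [hF, Prod.mk.injEq] at hpq ⊢
    exact ⟨(σ a).symm.injective hpq.1, (σ b).symm.injective hpq.2⟩
  have one_pos : (1 : ℕ) < K := by omega
  set i1 : Fin K := ⟨1, one_pos⟩ with hi1
  have hi1ne : i1 ≠ (0 : Fin K) := by
    simp [hi1, Fin.ext_iff]
  -- the values in cell (1,0) of the normalized squares
  have hne0 : ∀ a, F a i1 0 ≠ 0 := by
    intro a h
    have hcol : Function.Injective fun i => F a i 0 := by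
      have := ((hLatin a).2 0).injective
      exact fun x y hxy => this ((σ a).symm.injective hxy)
    have : i1 = (0 : Fin K) := hcol (by rw [h, hrow0 a 0] : F a i1 0 = F a 0 0)
    exact hi1ne this
  have hvinj : Function.Injective fun a => F a i1 0 := by
    intro a b hab
    by_contra hne
    have h1 : F a i1 0 = F b i1 0 := hab
    set c := F a i1 0 with hc
    have : ((i1, (0 : Fin K)) : Fin K × Fin K) = ((0 : Fin K), c) := by
      apply hFOrth a b hne
      simp only [Prod.mk.injEq]
      constructor
      · rw [hrow0 a c]
      · rw [hrow0 b c, ← h1]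
    exact hi1ne (congrArg Prod.fst this)
  -- package as an injection into the nonzero elements of Fin K
  let v : Fin r → {x : Fin K // x ≠ 0} := fun a => ⟨F a i1 0, hne0 a⟩
  have hv : Function.Injective v := by
    intro a b hab
    exact hvinj (congrArg Subtype.val hab)
  have := Fintype.card_le_of_injective v hv
  simpa [Fintype.card_subtype_compl, Fintype.card_fin] using this
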